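/- For every n ∈ ℕ, every complex zero z of the diagonal polynomial P_n satisfies z³ ∈ ℝ and z³ ≥ 0; that is, all zeros of P_n lie on the union of the three closed rays [0,∞) ∪ ω·[0,∞) ∪ ω²·[0,∞), where ω = exp(2πi/3). -/

import Mathlib

/-- The primitive third root of unity `ω = exp(2πi/3)`. -/
noncomputable def ω : ℂ := Complex.exp (2 * Real.pi * Complex.I / 3)

/-- The diagonal multiple orthogonal polynomial
`P n x = (−1)ⁿ 3⁻ⁿ e^{x³} (d/dx)ⁿ e^{−x³}` (that is, `P_{n,n}` for the
exponential cubic weight). -/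
noncomputable def P (n : ℕ) : ℂ → ℂ := fun x =>
  (-1) ^ n / 3 ^ n * Complex.exp (x ^ 3) *
    iteratedDeriv n (fun z => Complex.exp (-z ^ 3)) x

/-!
Write `Pₙ` as the real polynomial `realP n`, obtained from `1` by iterating `f ↦ x² f − f'/3`.
By induction, `realP n = x^(2n mod 3) · R(x³)` with `R` monic with simple positive zeros:
according to `2n mod 3`, the step acts on `R` as `R ↦ R − R'` or as `R ↦ (x − a) R − x R'` with
`a = 1/3, 2/3`. At the zeros `r₁ < ⋯ < r_m` of `R` (preceded by `0` in the second case) the new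
polynomial alternates in sign, ending with the sign opposite to its sign near `+∞`, so the
intermediate value theorem provides as many positive zeros as its degree. Hence a zero `z` of
`Pₙ` is `0` or has `z³ = rᵢ > 0`.
-/

open Polynomial Finset Filter

theorem Finset.neg_one_pow_card_filter_neg_mul_prod_pos {ι : Type*} (t : Finset ι) {f : ι → ℝ}
    (hf : ∀ i ∈ t, f i ≠ 0) : 0 < (-1) ^ #{i ∈ t | f i < 0} * ∏ i ∈ t, f i := by
  classical
  induction t using Finset.induction_on with
  | empty => simp
  | insert a t hat ih =>
    have ih := ih fun i hi => hf i (mem_insert_of_mem hi)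
    rw [prod_insert hat, filter_insert]
    rcases (hf a (mem_insert_self a t)).lt_or_gt with hneg | hpos
    · rw [if_pos hneg, card_insert_of_notMem fun h => hat (mem_filter.1 h).1, pow_succ]
      nlinarith
    · rw [if_neg hpos.not_gt]
      nlinarith

theorem exists_strictMono_zeros_of_mul_neg {d : ℕ} {f : ℝ → ℝ} (hf : Continuous f)
    {s : Fin (d + 1) → ℝ} (hs : StrictMono s)
    (hsign : ∀ k : Fin d, f (s k.castSucc) * f (s k.succ) < 0) :
    ∃ ρ : Fin d → ℝ, StrictMono ρ ∧ (∀ k, s k.castSucc < ρ k) ∧ ∀ k, f (ρ k) = 0 := by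
  have h : ∀ k : Fin d, ∃ c ∈ Set.Ioo (s k.castSucc) (s k.succ), f c = 0 := by
    intro k
    have hle := (hs k.castSucc_lt_succ).le
    rcases mul_neg_iff.1 (hsign k) with ⟨h₁, h₂⟩ | ⟨h₁, h₂⟩
    · exact intermediate_value_Ioo' hle hf.continuousOn ⟨h₂, h₁⟩
    · exact intermediate_value_Ioo hle hf.continuousOn ⟨h₁, h₂⟩
  choose ρ hρ hzero using h
  refine ⟨ρ, fun k l hkl => ?_, fun k => (hρ k).1, hzero⟩
  calc ρ k < s k.succ := (hρ k).2
    _ ≤ s l.castSucc := hs.monotone (Fin.succ_le_castSucc_iff.2 hkl)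
    _ < ρ l := (hρ l).1

theorem Polynomial.Monic.eventually_eval_pos {p : ℝ[X]} (hp : p.Monic) :
    ∀ᶠ x in atTop, 0 < p.eval x := by
  rcases Nat.eq_zero_or_pos p.natDegree with h | h
  · simp [eq_one_of_monic_natDegree_zero hp h]
  · refine (p.tendsto_atTop_of_leadingCoeff_nonneg ?_ ?_).eventually_gt_atTop 0
    · rw [degree_eq_natDegree hp.ne_zero]; exact_mod_cast h
    · rw [hp.leadingCoeff]; exact zero_le_one

theorem Polynomial.Monic.eq_prod_X_sub_C_of_injective {K : Type*} [Field K] {p : K[X]}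
    (hp : p.Monic) {d : ℕ} (hd : p.natDegree = d) {ρ : Fin d → K}
    (hρ : Function.Injective ρ) (hroot : ∀ k, p.IsRoot (ρ k)) :
    p = ∏ k, (X - C (ρ k)) := by
  refine eq_of_monic_of_dvd_of_natDegree_le (monic_prod_X_sub_C ρ univ) hp ?_ ?_
  · exact Finset.prod_dvd_of_coprime ((pairwise_coprime_X_sub_C hρ).set_pairwise _)
      fun k _ => dvd_iff_isRoot.2 (hroot k)
  · rw [natDegree_finsetProd_X_sub_C_eq_card, hd, card_univ, Fintype.card_fin]

section ProdXSubC

variable {m : ℕ} (r : Fin m → ℝ)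

theorem eval_prod_X_sub_C_self (i : Fin m) : (∏ j, (X - C (r j))).eval (r i) = 0 := by
  rw [eval_prod]
  exact prod_eq_zero (mem_univ i) (by simp)

theorem eval_derivative_prod_X_sub_C_self (i : Fin m) :
    (derivative (∏ j, (X - C (r j)))).eval (r i) = ∏ j ∈ univ.erase i, (r i - r j) := by
  rw [← mul_prod_erase univ _ (mem_univ i), derivative_mul]
  simp [eval_prod]

variable {r}

theorem neg_one_pow_mul_eval_derivative_prod_X_sub_C_pos (hr : StrictMono r) (i : Fin m) :
    0 < (-1) ^ (m - 1 - i) * (derivative (∏ j, (X - C (r j)))).eval (r i) := by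
  have hpos := neg_one_pow_card_filter_neg_mul_prod_pos (univ.erase i)
    (f := fun j => r i - r j) fun j hj => sub_ne_zero.2 (hr.injective.ne (ne_of_mem_erase hj).symm)
  have hcard : #{j ∈ univ.erase i | r i - r j < 0} = m - 1 - i := by
    rw [← Fin.card_Ioi]
    congr 1
    ext j
    simp only [mem_filter, mem_erase, mem_univ, mem_Ioi, sub_neg, hr.lt_iff_lt]
    exact ⟨fun h => h.2, fun h => ⟨⟨h.ne', trivial⟩, h⟩⟩
  rwa [eval_derivative_prod_X_sub_C_self, ← hcard]

theorem neg_one_pow_mul_eval_zero_prod_X_sub_C_pos (hr : ∀ i, 0 < r i) :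
    0 < (-1) ^ m * (∏ j, (X - C (r j))).eval 0 := by
  simp only [eval_prod, eval_sub, eval_X, eval_C, zero_sub, prod_neg, card_univ,
    Fintype.card_fin, ← mul_assoc, ← mul_pow, neg_one_mul, neg_neg, one_pow, one_mul]
  exact prod_pos fun i _ => hr i

end ProdXSubC

def SimplePositiveRooted (p : ℝ[X]) : Prop :=
  ∃ (m : ℕ) (r : Fin m → ℝ), StrictMono r ∧ (∀ i, 0 < r i) ∧ p = ∏ i, (X - C (r i))

theorem simplePositiveRooted_one : SimplePositiveRooted 1 :=
  ⟨0, Fin.elim0, fun i => i.elim0, fun i => i.elim0, by simp⟩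

theorem simplePositiveRooted_of_signs {g : ℝ[X]} (hg : g.Monic) {d : ℕ} (hd : g.natDegree = d)
    {t : Fin d → ℝ} (ht : StrictMono t) (ht₀ : ∀ k, 0 ≤ t k)
    (hsign : ∀ k : Fin d, 0 < (-1) ^ (d - k) * g.eval (t k)) : SimplePositiveRooted g := by
  obtain ⟨b, hbt, hb⟩ :=
    ((eventually_all.2 fun k => eventually_gt_atTop (t k)).and hg.eventually_eval_pos).exists
  set s : Fin (d + 1) → ℝ := Fin.snoc t b with hs_def
  have hs : StrictMono s := by
    rw [hs_def, ← Fin.insertNth_last', Fin.strictMono_insertNth_iff]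
    exact ⟨ht, fun k _ => hbt k, fun k hk => absurd hk (Fin.castSucc_lt_last k).not_ge⟩
  have hs_sign : ∀ k : Fin (d + 1), 0 < (-1) ^ (d - k) * g.eval (s k) := by
    intro k
    induction k using Fin.lastCases with
    | last => simpa [hs_def] using hb
    | cast k => simpa [hs_def] using hsign k
  have hs_alt : ∀ k : Fin d, g.eval (s k.castSucc) * g.eval (s k.succ) < 0 := by
    intro k
    have h₁ := hs_sign k.castSucc
    have h₂ := hs_sign k.succ
    have hexp : d - k = (d - (k + 1)) + 1 := by omega
    simp only [Fin.val_castSucc, Fin.val_succ, hexp, pow_succ] at h₁ h₂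
    nlinarith [mul_pos h₁ h₂, pow_mul_pow_eq_one (d - (k + 1)) (by norm_num : (-1 : ℝ) * -1 = 1)]
  obtain ⟨ρ, hρ, hρs, hzero⟩ := exists_strictMono_zeros_of_mul_neg g.continuous hs hs_alt
  refine ⟨d, ρ, hρ, fun k => (ht₀ k).trans_lt ?_,
    hg.eq_prod_X_sub_C_of_injective hd hρ.injective hzero⟩
  simpa [hs_def] using hρs k

theorem SimplePositiveRooted.sub_derivative {p : ℝ[X]} (hp : SimplePositiveRooted p) :
    SimplePositiveRooted (p - derivative p) := by
  obtain ⟨m, r, hr, hr₀, rfl⟩ := hp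
  set R := ∏ j, (X - C (r j))
  have hR : R.Monic := monic_prod_X_sub_C r univ
  have hlt : (derivative R).degree < R.degree := degree_derivative_lt hR.ne_zero
  refine simplePositiveRooted_of_signs (hR.sub_of_left hlt) ?_ hr (fun k => (hr₀ k).le) ?_
  · rw [natDegree_eq_of_degree_eq (degree_sub_eq_left_of_degree_lt hlt),
      natDegree_finsetProd_X_sub_C_eq_card, card_univ, Fintype.card_fin]
  · intro i
    have hexp : m - i = (m - 1 - i) + 1 := by omega
    rw [eval_sub, eval_prod_X_sub_C_self, hexp, pow_succ]
    linarith [neg_one_pow_mul_eval_derivative_prod_X_sub_C_pos hr i]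

theorem SimplePositiveRooted.X_sub_C_mul_sub_X_mul_derivative {a : ℝ} (ha : 0 < a) {p : ℝ[X]}
    (hp : SimplePositiveRooted p) :
    SimplePositiveRooted ((X - C a) * p - X * derivative p) := by
  obtain ⟨m, r, hr, hr₀, rfl⟩ := hp
  set R := ∏ j, (X - C (r j))
  have hR : R.Monic := monic_prod_X_sub_C r univ
  have hlead : ((X - C a) * R).Monic := (monic_X_sub_C a).mul hR
  have hlt : (X * derivative R).degree < ((X - C a) * R).degree := by
    rw [degree_mul, degree_mul, degree_X, degree_X_sub_C]
    exact WithBot.add_lt_add_left WithBot.one_ne_bot (degree_derivative_lt hR.ne_zero)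
  refine simplePositiveRooted_of_signs (hlead.sub_of_left hlt) (d := m + 1) ?_
    (Fin.strictMono_cons.2 ⟨hr₀, hr⟩) (Fin.cases le_rfl fun i => (hr₀ i).le) ?_
  · rw [natDegree_eq_of_degree_eq (degree_sub_eq_left_of_degree_lt hlt),
      (monic_X_sub_C a).natDegree_mul hR, natDegree_X_sub_C,
      natDegree_finsetProd_X_sub_C_eq_card, card_univ, Fintype.card_fin, add_comm]
  · intro k
    induction k using Fin.cases with
    | zero =>
      simp only [Fin.cons_zero, Fin.val_zero, Nat.sub_zero, pow_succ, eval_sub, eval_mul, eval_X,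
        eval_C, zero_sub, zero_mul, sub_zero]
      nlinarith [neg_one_pow_mul_eval_zero_prod_X_sub_C_pos hr₀]
    | succ i =>
      have hexp : m + 1 - (i + 1) = (m - 1 - i) + 1 := by omega
      simp only [Fin.cons_succ, Fin.val_succ, hexp, pow_succ, eval_sub, eval_mul, eval_X,
        eval_C, R, eval_prod_X_sub_C_self]
      nlinarith [neg_one_pow_mul_eval_derivative_prod_X_sub_C_pos hr i, hr₀ i]

theorem SimplePositiveRooted.exists_pos_eq_of_aeval_eq_zero {p : ℝ[X]}
    (hp : SimplePositiveRooted p) {w : ℂ} (hw : aeval w p = 0) : ∃ r : ℝ, 0 < r ∧ w = r := by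
  obtain ⟨m, r, -, hr₀, rfl⟩ := hp
  simp only [map_prod, map_sub, aeval_X, aeval_C, prod_eq_zero_iff, mem_univ, true_and,
    sub_eq_zero] at hw
  obtain ⟨i, hi⟩ := hw
  exact ⟨r i, hr₀ i, hi⟩

noncomputable def cubicStep (f : ℝ[X]) : ℝ[X] := X ^ 2 * f - C (1 / 3) * derivative f

theorem C_one_third_mul_three : C (1 / 3 : ℝ) * 3 = 1 := by
  rw [← C_ofNat, ← C_mul]; norm_num

theorem cubicStep_comp_X_pow_three (R : ℝ[X]) :
    cubicStep (R.comp (X ^ 3)) = X ^ 2 * (R - derivative R).comp (X ^ 3) := by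
  simp only [cubicStep, derivative_comp, derivative_X_pow, sub_comp, Nat.cast_ofNat, map_ofNat]
  linear_combination (-X ^ 2 * (derivative R).comp (X ^ 3)) * C_one_third_mul_three

theorem cubicStep_X_pow_succ_mul_comp_X_pow_three (k : ℕ) (R : ℝ[X]) :
    cubicStep (X ^ (k + 1) * R.comp (X ^ 3)) =
      X ^ k * ((X - C (((k : ℝ) + 1) / 3)) * R - X * derivative R).comp (X ^ 3) := by
  simp only [cubicStep, derivative_mul, derivative_comp, derivative_X_pow, sub_comp, mul_comp,
    X_comp, C_comp, Nat.cast_ofNat, map_ofNat, Nat.add_sub_cancel]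
  have h : C (1 / 3 : ℝ) * C ((k + 1 : ℕ) : ℝ) = C (((k : ℝ) + 1) / 3) := by
    rw [← C_mul]; push_cast; ring_nf
  linear_combination (-X ^ k * R.comp (X ^ 3)) * h
    - (X ^ (k + 3) * (derivative R).comp (X ^ 3)) * C_one_third_mul_three

noncomputable def realP (n : ℕ) : ℝ[X] := cubicStep^[n] 1

theorem realP_succ (n : ℕ) : realP (n + 1) = cubicStep (realP n) :=
  Function.iterate_succ_apply' _ _ _

theorem iteratedDeriv_exp_neg_cube (n : ℕ) :
    iteratedDeriv n (fun z : ℂ => Complex.exp (-z ^ 3)) =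
      fun x => (-3) ^ n * Complex.exp (-x ^ 3) * aeval x (realP n) := by
  induction n with
  | zero => funext x; simp [realP]
  | succ n ih =>
    funext x
    have hcube : HasDerivAt (fun x : ℂ => Complex.exp (-x ^ 3))
        (Complex.exp (-x ^ 3) * (-(3 * x ^ 2))) x := by
      simpa using (hasDerivAt_pow 3 x).neg.cexp
    have h : HasDerivAt (fun x => (-3) ^ n * Complex.exp (-x ^ 3) * aeval x (realP n))
        ((-3) ^ n * (Complex.exp (-x ^ 3) * (-(3 * x ^ 2))) * aeval x (realP n) +
          (-3) ^ n * Complex.exp (-x ^ 3) * aeval x (derivative (realP n))) x :=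
      (hcube.const_mul _).mul ((realP n).hasDerivAt_aeval x)
    rw [iteratedDeriv_succ, ih, h.deriv, realP_succ]
    simp only [cubicStep, map_sub, map_mul, map_pow, aeval_X, aeval_C, one_div, map_inv₀,
      Complex.coe_algebraMap, Complex.ofReal_ofNat]
    ring

theorem P_eq_aeval_realP (n : ℕ) (x : ℂ) : P n x = aeval x (realP n) := by
  rw [P, iteratedDeriv_exp_neg_cube]
  beta_reduce
  rw [Complex.exp_neg]
  field_simp
  rw [← mul_pow]
  norm_num

theorem exists_realP_eq_X_pow_mul_comp (n : ℕ) :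
    ∃ R, SimplePositiveRooted R ∧ realP n = X ^ (2 * n % 3) * R.comp (X ^ 3) := by
  induction n with
  | zero => exact ⟨1, simplePositiveRooted_one, by simp [realP]⟩
  | succ n ih =>
    obtain ⟨R, hR, hn⟩ := ih
    rw [realP_succ, hn]
    rcases h : 2 * n % 3 with _ | k
    · refine ⟨_, hR.sub_derivative, ?_⟩
      rw [pow_zero, one_mul, cubicStep_comp_X_pow_three, show 2 * (n + 1) % 3 = 2 by omega]
    · refine ⟨_, hR.X_sub_C_mul_sub_X_mul_derivative (a := ((k : ℝ) + 1) / 3) (by positivity), ?_⟩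
      rw [cubicStep_X_pow_succ_mul_comp_X_pow_three, show 2 * (n + 1) % 3 = k by omega]

/-- Every complex zero `z` of the diagonal polynomial `Pₙ`
satisfies `z³ ∈ ℝ` and `z³ ≥ 0`, i.e. all zeros lie on the union of the three
closed rays `[0,∞) ∪ ω·[0,∞) ∪ ω²·[0,∞)`. -/
theorem stmt12 (n : ℕ) (z : ℂ) (hz : P n z = 0) :
    (z ^ 3).im = 0 ∧ 0 ≤ (z ^ 3).re := by
  obtain ⟨R, hR, hPR⟩ := exists_realP_eq_X_pow_mul_comp n
  rw [P_eq_aeval_realP, hPR, map_mul, map_pow, aeval_X, aeval_comp, map_pow, aeval_X] at hz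
  rcases mul_eq_zero.1 hz with hz₀ | hRz
  · simp [pow_eq_zero_iff'.1 hz₀]
  · obtain ⟨r, hr, hzr⟩ := hR.exists_pos_eq_of_aeval_eq_zero hRz
    rw [hzr]
    exact ⟨Complex.ofReal_im r, by simpa using hr.le⟩
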